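/- Let k be an algebraically closed field of characteristic 0 and let F ∈ k[X_1,…,X_m,T] be a polynomial that is monic in T of degree N. Let Z(F) ⊆ k^{m+1} be the zero set of F and let ZZ(F) ⊆ k^{m+1} be the common zero set of F and of its partial derivatives ∂^j F/∂T^j for j = 1,…,⌊N/2⌋. Then the restriction to ZZ(F) of the projection p : k^{m+1} → k^m onto the first m coordinates is a homeomorphism (with respect to the Zariski topologies) of ZZ(F) onto its image, and the image p(ZZ(F)) is Zariski closed in k^m. -/

import Mathlib

/-!
Over a point `x`, every `t` with `(x, t) ∈ ZZ(F)` is a root of `F(x, ·)` of multiplicity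
`> N / 2`, so there is at most one such `t` and the projection is injective on `ZZ(F)`.
If an ideal `J ⊆ k[X][T]` contains the monic `F`, then `k[X][T] ⧸ J` is integral over `k[X]`,
so by lying over the projection of the zero set of `J` is the zero set of `J ∩ k[X]`.
Applied to `J` generated by the derivatives of `F` and one more polynomial `h`, this shows
that the projection sends the traces on `ZZ(F)` of the closed sets `{h = 0}` to closed sets,
which makes the inverse continuous.
-/

open Polynomial

/-- Evaluation of a polynomial `F ∈ k[X_1,…,X_m][T]` at a point `(x,t) ∈ k^m × k`. -/
noncomputable def evXT {k : Type*} [CommSemiring k] {m : ℕ}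
    (F : Polynomial (MvPolynomial (Fin m) k)) (x : Fin m → k) (t : k) : k :=
  Polynomial.eval t (F.map (MvPolynomial.eval x))

/-- The Zariski topology on affine `m`-space `k^m`: generated by the basic open sets
`{x | f(x) ≠ 0}` for polynomials `f`. -/
def zariskiAff (k : Type*) [CommSemiring k] (m : ℕ) : TopologicalSpace (Fin m → k) :=
  TopologicalSpace.generateFrom
    {U | ∃ f : MvPolynomial (Fin m) k, U = {x | MvPolynomial.eval x f ≠ 0}}

/-- The Zariski topology on `k^{m+1} = k^m × k`: generated by the basic open sets
`{(x,t) | F(x,t) ≠ 0}` for polynomials `F ∈ k[X_1,…,X_m,T]`. -/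
def zariskiAff' (k : Type*) [CommSemiring k] (m : ℕ) : TopologicalSpace ((Fin m → k) × k) :=
  TopologicalSpace.generateFrom
    {U | ∃ F : Polynomial (MvPolynomial (Fin m) k), U = {p | evXT F p.1 p.2 ≠ 0}}

/-- `ZZ(F)`: the common zero set of `F` and of its derivatives `∂^j F/∂T^j`,
`j = 1, …, ⌊deg F / 2⌋`. -/
noncomputable def ZZset {k : Type*} [CommSemiring k] {m : ℕ}
    (F : Polynomial (MvPolynomial (Fin m) k)) : Set ((Fin m → k) × k) :=
  {p | ∀ j ≤ F.natDegree / 2, evXT (Polynomial.derivative^[j] F) p.1 p.2 = 0}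

namespace Polynomial

theorem eq_of_natDegree_div_two_lt_rootMultiplicity {R : Type*} [CommRing R] [IsDomain R]
    {p : R[X]} {s t : R} (hs : p.natDegree / 2 < p.rootMultiplicity s)
    (ht : p.natDegree / 2 < p.rootMultiplicity t) : s = t := by
  classical
  by_contra hst
  have hsum : p.rootMultiplicity s + p.rootMultiplicity t ≤ p.natDegree := by
    have hle : p.roots.filter (· = s) + p.roots.filter (· = t) ≤ p.roots := by
      have hdisj : p.roots.filter (fun a => a = s ∧ a = t) = 0 :=
        Multiset.filter_eq_nil.mpr fun a _ h => hst (h.1.symm.trans h.2)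
      rw [Multiset.filter_add_filter, hdisj, add_zero]
      exact Multiset.filter_le _ _
    calc p.rootMultiplicity s + p.rootMultiplicity t
        = Multiset.card (p.roots.filter (· = s) + p.roots.filter (· = t)) := by
          rw [Multiset.card_add, ← count_roots, ← count_roots, Multiset.count_eq_card_filter_eq,
            Multiset.count_eq_card_filter_eq]
          simp only [eq_comm]
      _ ≤ Multiset.card p.roots := Multiset.card_le_card hle
      _ ≤ p.natDegree := card_roots' p
  omega

theorem exists_forall_isRoot_of_ne_top {k : Type*} [Field k] [IsAlgClosed k] {I : Ideal k[X]}
    (hI : I ≠ ⊤) : ∃ t, ∀ p ∈ I, p.IsRoot t := by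
  obtain ⟨q, rfl⟩ := (IsPrincipalIdealRing.principal I).principal
  have hq : q.degree ≠ 0 := fun h =>
    hI (Ideal.span_singleton_eq_top.mpr (isUnit_iff_degree_eq_zero.mpr h))
  obtain ⟨t, ht⟩ := IsAlgClosed.exists_root q hq
  exact ⟨t, fun p hp => ht.dvd (Ideal.mem_span_singleton.mp hp)⟩

theorem exists_isPrime_le_comap_C_eq {A : Type*} [CommRing A] {J : Ideal A[X]} {F : A[X]}
    (hF : F.Monic) (hFJ : F ∈ J) (p : Ideal A) [p.IsPrime] (hJp : J.comap C ≤ p) :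
    ∃ P : Ideal A[X], P.IsPrime ∧ J ≤ P ∧ P.comap C = p := by
  have : Algebra.IsIntegral A (A[X] ⧸ J) := ⟨hF.quotient_isIntegral hFJ⟩
  obtain ⟨Q, -, hQ, hQp⟩ := Ideal.exists_ideal_over_prime_of_isIntegral (S := A[X] ⧸ J) p ⊥
    fun a ha => hJp (Ideal.Quotient.eq_zero_iff_mem (I := J) (a := C a) |>.mp (Ideal.mem_bot.mp ha))
  refine ⟨Q.comap (Ideal.Quotient.mk J), Ideal.comap_isPrime _ _, fun f hf => ?_, ?_⟩
  · simp [Ideal.Quotient.eq_zero_iff_mem.mpr hf, Q.zero_mem]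
  · rwa [Ideal.comap_comap]

theorem exists_forall_isRoot_map_of_monic_mem {A k : Type*} [CommRing A] [Field k] [IsAlgClosed k]
    {φ : A →+* k} (hφ : Function.Surjective φ) {J : Ideal A[X]} {F : A[X]} (hF : F.Monic)
    (hFJ : F ∈ J) (hJ : J.comap C ≤ RingHom.ker φ) :
    ∃ t, ∀ h ∈ J, (h.map φ).IsRoot t := by
  have := RingHom.ker_isPrime φ
  obtain ⟨P, hP, hJP, hPC⟩ := exists_isPrime_le_comap_C_eq hF hFJ (RingHom.ker φ) hJ
  have hker : RingHom.ker (mapRingHom φ) ≤ P := by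
    rw [ker_mapRingHom, Ideal.map_le_iff_le_comap, hPC]
  have hPmap : (P.map (mapRingHom φ)).IsPrime :=
    Ideal.map_isPrime_of_surjective (map_surjective φ hφ) hker
  obtain ⟨t, ht⟩ := exists_forall_isRoot_of_ne_top hPmap.ne_top
  exact ⟨t, fun h hh => ht _ (Ideal.mem_map_of_mem _ (hJP hh))⟩

end Polynomial

section ZariskiAffine

open Topology

variable {k : Type*} {m : ℕ}

def zeroLocusXT [CommSemiring k] (S : Set (Polynomial (MvPolynomial (Fin m) k))) :
    Set ((Fin m → k) × k) :=
  {p | ∀ h ∈ S, evXT h p.1 p.2 = 0}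

theorem zeroLocusXT_insert [CommSemiring k] (h : Polynomial (MvPolynomial (Fin m) k))
    (S : Set (Polynomial (MvPolynomial (Fin m) k))) :
    zeroLocusXT (insert h S) = zeroLocusXT S \ {p | evXT h p.1 p.2 ≠ 0} := by
  ext p
  simp [zeroLocusXT, and_comm]

theorem ZZset_eq_zeroLocusXT [CommSemiring k] (F : Polynomial (MvPolynomial (Fin m) k)) :
    ZZset F = zeroLocusXT ((derivative^[·] F) '' Set.Iic (F.natDegree / 2)) := by
  ext p
  simp [ZZset, zeroLocusXT]

theorem evXT_C [CommSemiring k] (g : MvPolynomial (Fin m) k) (x : Fin m → k) (t : k) :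
    evXT (C g) x t = MvPolynomial.eval x g := by
  rw [evXT, map_C, eval_C]

theorem isClosed_zeroLocus [CommSemiring k] (T : Set (MvPolynomial (Fin m) k)) :
    IsClosed[zariskiAff k m] {x | ∀ g ∈ T, MvPolynomial.eval x g = 0} := by
  refine @isOpen_compl_iff _ _ (zariskiAff k m) |>.mp ?_
  have hcompl : {x | ∀ g ∈ T, MvPolynomial.eval x g = 0}ᶜ =
      ⋃ g ∈ T, {x | MvPolynomial.eval x g ≠ 0} := by
    ext x
    simp
  rw [hcompl]
  exact @isOpen_biUnion _ _ (zariskiAff k m) _ _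
    fun g _ => TopologicalSpace.GenerateOpen.basic _ ⟨g, rfl⟩

theorem continuous_fst_zariski [CommSemiring k] :
    Continuous[zariskiAff' k m, zariskiAff k m] Prod.fst := by
  refine continuous_generateFrom_iff.mpr ?_
  rintro _ ⟨f, rfl⟩
  exact TopologicalSpace.GenerateOpen.basic _ ⟨C f, by simp [evXT_C]⟩

theorem image_fst_zeroLocusXT [Field k] [IsAlgClosed k]
    {S : Set (Polynomial (MvPolynomial (Fin m) k))} {F : Polynomial (MvPolynomial (Fin m) k)}
    (hF : F.Monic) (hFS : F ∈ S) :
    Prod.fst '' zeroLocusXT S = {x | ∀ g ∈ (Ideal.span S).comap C, MvPolynomial.eval x g = 0} := by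
  ext x
  constructor
  · rintro ⟨⟨x, t⟩, hxt, rfl⟩ g hg
    let ev : Polynomial (MvPolynomial (Fin m) k) →+* k :=
      (evalRingHom t).comp (mapRingHom (MvPolynomial.eval x))
    have hspan : Ideal.span S ≤ RingHom.ker ev := Ideal.span_le.mpr hxt
    rw [← evXT_C g x t]
    exact hspan hg
  · intro hx
    obtain ⟨t, ht⟩ := exists_forall_isRoot_map_of_monic_mem
      (φ := MvPolynomial.eval x) (fun c => ⟨MvPolynomial.C c, MvPolynomial.eval_C c⟩) hF
      (Ideal.subset_span hFS) hx
    exact ⟨(x, t), fun h hh => ht h (Ideal.subset_span hh), rfl⟩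

theorem isClosed_image_fst_zeroLocusXT [Field k] [IsAlgClosed k]
    {S : Set (Polynomial (MvPolynomial (Fin m) k))} {F : Polynomial (MvPolynomial (Fin m) k)}
    (hF : F.Monic) (hFS : F ∈ S) : IsClosed[zariskiAff k m] (Prod.fst '' zeroLocusXT S) := by
  rw [image_fst_zeroLocusXT hF hFS]
  exact isClosed_zeroLocus _

theorem natDegree_div_two_lt_rootMultiplicity_of_mem_ZZset [Field k] [CharZero k]
    {F : Polynomial (MvPolynomial (Fin m) k)} (hF : F.Monic) {x : Fin m → k} {t : k}
    (hxt : (x, t) ∈ ZZset F) :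
    (F.map (MvPolynomial.eval x)).natDegree / 2 <
      (F.map (MvPolynomial.eval x)).rootMultiplicity t := by
  rw [lt_rootMultiplicity_iff_isRoot_iterate_derivative (hF.map _).ne_zero, hF.natDegree_map]
  intro j hj
  rw [iterate_derivative_map]
  exact hxt j hj

theorem injOn_fst_ZZset [Field k] [CharZero k] {F : Polynomial (MvPolynomial (Fin m) k)}
    (hF : F.Monic) : Set.InjOn Prod.fst (ZZset F) := by
  rintro ⟨x, s⟩ hs ⟨x', t⟩ ht (rfl : x = x')
  rw [eq_of_natDegree_div_two_lt_rootMultiplicity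
    (natDegree_div_two_lt_rootMultiplicity_of_mem_ZZset hF hs)
    (natDegree_div_two_lt_rootMultiplicity_of_mem_ZZset hF ht)]

end ZariskiAffine

theorem Set.InjOn.continuous_imageOfInjOn_symm {X Y : Type*} [tX : TopologicalSpace X]
    [TopologicalSpace Y] {B : Set (Set X)} (hX : tX = .generateFrom B) {f : X → Y} {s : Set X}
    (hf : s.InjOn f) (hB : ∀ U ∈ B, IsClosed (f '' (s \ U))) :
    Continuous (Equiv.Set.imageOfInjOn f s hf).symm := by
  subst hX
  refine continuous_induced_rng.mpr (continuous_generateFrom_iff.mpr fun U hU => ?_)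
  have hpre : (Subtype.val ∘ (Equiv.Set.imageOfInjOn f s hf).symm) ⁻¹' U =
      (Subtype.val ⁻¹' (f '' (s \ U)))ᶜ := by
    ext ⟨_, x, hx, rfl⟩
    have hsymm : (Equiv.Set.imageOfInjOn f s hf).symm ⟨f x, x, hx, rfl⟩ = ⟨x, hx⟩ :=
      (Equiv.symm_apply_eq _).mpr rfl
    simp only [Set.mem_preimage, Function.comp_apply, hsymm, Set.mem_compl_iff, Set.mem_image,
      Set.mem_sdiff, not_exists, not_and]
    exact ⟨fun hxU x' hx' hfx => hx'.2 (hf hx'.1 hx hfx ▸ hxU),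
      fun h => not_not.mp fun hxU => h x ⟨hx, hxU⟩ rfl⟩
  rw [hpre]
  exact ((hB U hU).preimage continuous_subtype_val).isOpen_compl

theorem zzSet_proj_homeomorph {k : Type*} [Field k] [IsAlgClosed k] [CharZero k] {m : ℕ}
    (F : Polynomial (MvPolynomial (Fin m) k)) (hF : F.Monic) :
    (∃ e : @Homeomorph (ZZset F) (Prod.fst '' ZZset F)
        (@instTopologicalSpaceSubtype _ _ (zariskiAff' k m))
        (@instTopologicalSpaceSubtype _ _ (zariskiAff k m)),
      ∀ z : ZZset F, (e z : Fin m → k) = (z : (Fin m → k) × k).1) ∧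
    @IsClosed _ (zariskiAff k m) (Prod.fst '' ZZset F) := by
  let _ := zariskiAff k m
  let _ := zariskiAff' k m
  have hFD : F ∈ (derivative^[·] F) '' Set.Iic (F.natDegree / 2) := ⟨0, Nat.zero_le _, rfl⟩
  have hinj := injOn_fst_ZZset hF
  refine ⟨⟨{ toEquiv := Equiv.Set.imageOfInjOn Prod.fst (ZZset F) hinj
             continuous_toFun := (continuous_fst_zariski.comp continuous_subtype_val).subtype_mk _
             continuous_invFun := hinj.continuous_imageOfInjOn_symm rfl ?_ },
    fun _ => rfl⟩, ?_⟩
  · rintro _ ⟨h, rfl⟩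
    rw [ZZset_eq_zeroLocusXT, ← zeroLocusXT_insert]
    exact isClosed_image_fst_zeroLocusXT hF (Set.mem_insert_of_mem _ hFD)
  · rw [ZZset_eq_zeroLocusXT]
    exact isClosed_image_fst_zeroLocusXT hF hFD
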